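/- arXiv:2309.09931 — 3 statements merged into one kernel-verified Lean document; each statement's English description precedes it below -/
import Mathlib

section
/- The rewrite system R' obtained by orienting the equations x+e=x, e+x=x, (x+y)+z=x+(y+z), (x+y)·z=y·(x·z), d·x=(w·x)+x, e·x=x, w·(x+y)=(w·x)+(w·y), (w·x)·y=y+x, w·e=e left-to-right is terminating and confluent. -/
/-- Ground terms over constants d, w, e with binary operations + (add) and · (app). -/
inductive Tm : Type
  | d : Tm
  | w : Tm
  | e : Tm
  | add : Tm → Tm → Tm
  | app : Tm → Tm → Tm
  deriving DecidableEq

open Tm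

/-- Root rewrite steps: instances of the oriented equations of E'. -/
inductive Root : Tm → Tm → Prop
  | addE (x) : Root (add x e) x
  | eAdd (x) : Root (add e x) x
  | assoc (x y z) : Root (add (add x y) z) (add x (add y z))
  | appAdd (x y z) : Root (app (add x y) z) (app y (app x z))
  | dx (x) : Root (app d x) (add (app w x) x)
  | appE (x) : Root (app e x) x
  | wAdd (x y) : Root (app w (add x y)) (add (app w x) (app w y))
  | wApp (x y) : Root (app (app w x) y) (add y x)
  | wE : Root (app w e) e

/-- One rewrite step: a root step applied at some subterm position. -/
inductive Step : Tm → Tm → Prop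
  | root {t u} : Root t u → Step t u
  | addL {t t' u} : Step t t' → Step (add t u) (add t' u)
  | addR {t u u'} : Step u u' → Step (add t u) (add t u')
  | appL {t t' u} : Step t t' → Step (app t u) (app t' u)
  | appR {t u u'} : Step u u' → Step (app t u) (app t u')

/-- Zero or more rewrite steps. -/
def Steps : Tm → Tm → Prop := Relation.ReflTransGen Step

/-- A normal form is a term to which no rule applies. -/
def NormalForm (t : Tm) : Prop := ∀ u, ¬ Step t u

/-- Provable equality in the equational theory E'. -/
def TermEq : Tm → Tm → Prop := Relation.EqvGen Step

/-!
Termination: interpret `d, w, e` as `2, 1, 1`, `x + y` as `2x + y + 1` and `x · y` as `3 ^ x * y`.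
On positive naturals this is strictly monotone in every argument, and every rule strictly
decreases it.

Confluence: `nf` normalises bottom-up, with `addNF` flattening sums to the right and dropping
`e`, `wAppNF` distributing `w ·` over sums, and `appNF` firing the remaining rules. Every term
rewrites to its `nf`, and a step does not change `nf`, so two reducts of `t` meet at `nf t`.
Invariance under `(w·x)·y → y + x` is the one delicate case: it needs `nf x` to satisfy `Canon`,
i.e. to be a right-nested sum of heads `d`, `w`, `w·h`.
-/

theorem Relation.join_of_normalizer {α : Type*} {r : α → α → Prop} (n : α → α)
    (hn : ∀ a b, r a b → n a = n b) (hr : ∀ a, ReflTransGen r a (n a)) {a b c : α}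
    (hb : ReflTransGen r a b) (hc : ReflTransGen r a c) : Join (ReflTransGen r) b c := by
  have hinv : ∀ {b}, ReflTransGen r a b → n a = n b := fun h => by
    induction h with
    | refl => rfl
    | tail _ hs ih => exact ih.trans (hn _ _ hs)
  exact ⟨n a, hinv hb ▸ hr b, hinv hc ▸ hr c⟩

def weight : Tm → ℕ
  | d => 2
  | w => 1
  | e => 1
  | add a b => 2 * weight a + weight b + 1
  | app a b => 3 ^ weight a * weight b

lemma one_le_weight (t : Tm) : 1 ≤ weight t := by
  induction t with
  | add => simp only [weight]; omega
  | app _ _ _ hb => exact Nat.mul_pos (by positivity) hb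
  | _ => simp [weight]

lemma weight_lt_of_root {t u : Tm} (h : Root t u) : weight u < weight t := by
  cases h with
  | appAdd x y z =>
    simp only [weight]
    have hz := one_le_weight z
    calc 3 ^ weight y * (3 ^ weight x * weight z)
        = 3 ^ (weight x + weight y) * weight z := by rw [pow_add]; ring
      _ < 3 ^ (2 * weight x + weight y + 1) * weight z :=
        Nat.mul_lt_mul_of_pos_right (Nat.pow_lt_pow_right (by norm_num) (by omega)) hz
  | wApp x y =>
    simp only [weight, pow_one]
    have hx := one_le_weight x
    have hy := one_le_weight y
    have bernoulli : 1 + 3 * weight x * 2 ≤ 3 ^ (3 * weight x) := by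
      exact_mod_cast one_add_le_pow_of_two_add_nonneg (a := 2) (by norm_num) (3 * weight x)
    nlinarith
  | wE => simp [weight]
  | _ => have := one_le_weight ‹Tm›; simp only [weight]; omega

lemma weight_lt_of_step {t u : Tm} (h : Step t u) : weight u < weight t := by
  induction h with
  | root h => exact weight_lt_of_root h
  | addL _ ih | addR _ ih => simp only [weight]; omega
  | @appL t t' u _ ih =>
    exact Nat.mul_lt_mul_of_pos_right (Nat.pow_lt_pow_right (by norm_num) ih) (one_le_weight u)
  | appR _ ih => exact Nat.mul_lt_mul_of_pos_left ih (by positivity)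

def addNF : Tm → Tm → Tm
  | e, y => y
  | x, e => x
  | add a b, y => addNF a (addNF b y)
  | x, y => add x y

def wAppNF : Tm → Tm
  | add a b => addNF (wAppNF a) (wAppNF b)
  | e => e
  | y => app w y

def appNF : Tm → Tm → Tm
  | add a b, y => appNF b (appNF a y)
  | d, y => addNF (wAppNF y) y
  | e, y => y
  | w, y => wAppNF y
  | app w a, y => addNF y a
  | x, y => app x y

def nf : Tm → Tm
  | add a b => addNF (nf a) (nf b)
  | app a b => appNF (nf a) (nf b)
  | t => t

@[simp] lemma addNF_e_left (y : Tm) : addNF e y = y := by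
  cases y <;> rfl

@[simp] lemma addNF_e_right (x : Tm) : addNF x e = x := by
  cases x <;> rfl

lemma addNF_add (a b : Tm) {y : Tm} (hy : y ≠ e) : addNF (add a b) y = addNF a (addNF b y) :=
  addNF.eq_3 y a b hy

lemma addNF_ne_e {x y : Tm} (hy : y ≠ e) : addNF x y ≠ e := by
  fun_induction addNF x y <;> simp_all

lemma addNF_assoc (x y z : Tm) : addNF (addNF x y) z = addNF x (addNF y z) := by
  rcases eq_or_ne z e with rfl | hz
  · simp
  fun_induction addNF x y with
  | case1 | case2 => simp
  | case3 a b y _ ih₁ ih₂ => rw [ih₂, ih₁, addNF_add a b (addNF_ne_e hz)]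
  | case4 x y => rw [addNF_add x y hz]

lemma appNF_addNF (x y z : Tm) : appNF (addNF x y) z = appNF y (appNF x z) := by
  fun_induction addNF x y generalizing z <;> simp_all [appNF]

lemma wAppNF_addNF (x y : Tm) : wAppNF (addNF x y) = addNF (wAppNF x) (wAppNF y) := by
  fun_induction addNF x y <;> simp_all [wAppNF, addNF_assoc]

inductive IsHead : Tm → Prop
  | d : IsHead d
  | w : IsHead w
  | wApp (a : Tm) : IsHead (app w a)

inductive Canon : Tm → Prop
  | d : Canon d
  | w : Canon w
  | e : Canon e
  | add {x y : Tm} : Canon x → Canon y → IsHead x → y ≠ e → Canon (add x y)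
  | wApp {y : Tm} : Canon y → IsHead y → Canon (app w y)

lemma addNF_of_isHead {x y : Tm} (hx : IsHead x) (hy : y ≠ e) : addNF x y = add x y := by
  cases hx <;> cases y <;> simp_all [addNF]

lemma isHead_of_canon {x : Tm} (hx : Canon x) (he : x ≠ e) (hadd : ∀ a b, x ≠ add a b) :
    IsHead x := by
  cases hx with
  | d => exact .d
  | w => exact .w
  | e => exact absurd rfl he
  | add => exact absurd rfl (hadd _ _)
  | wApp => exact .wApp _

lemma canon_addNF {x y : Tm} (hx : Canon x) (hy : Canon y) : Canon (addNF x y) := by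
  fun_induction addNF x y with
  | case1 | case2 => simp_all
  | case3 a b y _ ih₁ ih₂ =>
    cases hx with
    | add ha hb => exact ih₂ ha (ih₁ hb hy)
  | case4 x y hx' hy' hadd =>
    exact .add hx hy (isHead_of_canon hx hx' hadd) hy'

lemma canon_wAppNF {x : Tm} (hx : Canon x) : Canon (wAppNF x) := by
  fun_induction wAppNF x with
  | case1 a b ih₁ ih₂ =>
    cases hx with
    | add ha hb => exact canon_addNF (ih₁ ha) (ih₂ hb)
  | case2 => exact .e
  | case3 y hadd he => exact .wApp hx (isHead_of_canon hx he hadd)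

lemma canon_appNF {x y : Tm} (hx : Canon x) (hy : Canon y) : Canon (appNF x y) := by
  fun_induction appNF x y with
  | case1 a b y ih₁ ih₂ =>
    cases hx with
    | add ha hb => exact ih₂ hb (ih₁ ha hy)
  | case2 => exact canon_addNF (canon_wAppNF hy) hy
  | case3 => exact hy
  | case4 => exact canon_wAppNF hy
  | case5 a y =>
    cases hx with
    | wApp ha => exact canon_addNF hy ha
  | case6 => cases hx <;> simp_all

lemma canon_nf (t : Tm) : Canon (nf t) := by
  induction t with
  | d => exact .d
  | w => exact .w
  | e => exact .e
  | add a b iha ihb => exact canon_addNF iha ihb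
  | app a b iha ihb => exact canon_appNF iha ihb

lemma appNF_wAppNF {x : Tm} (hx : Canon x) (y : Tm) : appNF (wAppNF x) y = addNF y x := by
  induction hx generalizing y with
  | add _ _ ha hb iha ihb =>
    rw [wAppNF, appNF_addNF, iha, ihb, addNF_assoc, addNF_of_isHead ha hb]
  | _ => simp [wAppNF, appNF]

lemma nf_eq_of_root {t u : Tm} (h : Root t u) : nf t = nf u := by
  cases h with
  | wAdd => simp [nf, appNF, wAppNF_addNF]
  | wApp x y => simp [nf, appNF, appNF_wAppNF (canon_nf x)]
  | _ => simp [nf, appNF, addNF_assoc, appNF_addNF, wAppNF]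

lemma nf_eq_of_step {t u : Tm} (h : Step t u) : nf t = nf u := by
  induction h with
  | root h => exact nf_eq_of_root h
  | _ _ ih => simp only [nf, ih]

lemma steps_add {t t' u u' : Tm} (ht : Steps t t') (hu : Steps u u') :
    Steps (add t u) (add t' u') :=
  (Relation.ReflTransGen.lift (add · u) (fun _ _ => .addL) _ _ ht).trans
    (Relation.ReflTransGen.lift (add t' ·) (fun _ _ => .addR) _ _ hu)

lemma steps_app {t t' u u' : Tm} (ht : Steps t t') (hu : Steps u u') :
    Steps (app t u) (app t' u') :=
  (Relation.ReflTransGen.lift (app · u) (fun _ _ => .appL) _ _ ht).trans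
    (Relation.ReflTransGen.lift (app t' ·) (fun _ _ => .appR) _ _ hu)

lemma steps_of_root {t u : Tm} (h : Root t u) : Steps t u := .single (.root h)

lemma steps_addNF (x y : Tm) : Steps (add x y) (addNF x y) := by
  fun_induction addNF x y with
  | case1 y => exact steps_of_root (.eAdd y)
  | case2 x => exact steps_of_root (.addE x)
  | case3 a b y _ ih₁ ih₂ =>
    exact (steps_of_root (.assoc a b y)).trans ((steps_add .refl ih₁).trans ih₂)
  | case4 => exact .refl

lemma steps_wAppNF (x : Tm) : Steps (app w x) (wAppNF x) := by
  fun_induction wAppNF x with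
  | case1 a b ih₁ ih₂ =>
    exact (steps_of_root (.wAdd a b)).trans ((steps_add ih₁ ih₂).trans (steps_addNF _ _))
  | case2 => exact steps_of_root .wE
  | case3 => exact .refl

lemma steps_appNF (x y : Tm) : Steps (app x y) (appNF x y) := by
  fun_induction appNF x y with
  | case1 a b y ih₁ ih₂ =>
    exact (steps_of_root (.appAdd a b y)).trans ((steps_app .refl ih₁).trans ih₂)
  | case2 y =>
    exact (steps_of_root (.dx y)).trans
      ((steps_add (steps_wAppNF y) .refl).trans (steps_addNF _ _))
  | case3 y => exact steps_of_root (.appE y)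
  | case4 y => exact steps_wAppNF y
  | case5 a y => exact (steps_of_root (.wApp a y)).trans (steps_addNF y a)
  | case6 => exact .refl

lemma steps_nf (t : Tm) : Steps t (nf t) := by
  induction t with
  | add a b iha ihb => exact (steps_add iha ihb).trans (steps_addNF _ _)
  | app a b iha ihb => exact (steps_app iha ihb).trans (steps_appNF _ _)
  | _ => exact .refl

/-- the rewrite system R' is terminating and confluent. -/
theorem R'_terminating_confluent :
    (¬ ∃ f : ℕ → Tm, ∀ n : ℕ, Step (f n) (f (n + 1))) ∧
    (∀ t u v : Tm, Steps t u → Steps t v → ∃ w : Tm, Steps u w ∧ Steps v w) :=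
  ⟨fun ⟨f, hf⟩ => not_strictAnti_of_wellFoundedLT (weight ∘ f)
      (strictAnti_nat_of_succ_lt fun n => weight_lt_of_step (hf n)),
    fun _ _ _ => Relation.join_of_normalizer nf (fun _ _ => nf_eq_of_step) steps_nf⟩
end

section
/- (Slattery's twins) In the equational theory E' over {d, w, e, +, ·}, the terms p = w·(d·(d+w)) and q = d·(d+w) satisfy p·e ≡ q and q·e ≡ p, and their normal forms under R' are distinct. -/
open Tm

/-!
Writing `s = d + w`, `q = d·s` and `p = w·q`, the rule `(w·x)·y → y + x` gives
`p·e → e + q → q`, while `q·e → (w·s + s)·e → s·((w·s)·e) → s·(e + s) → s·s → w·(d·s) = p`.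
For the normal forms it suffices that `p` and `q` have finitely many reducts (13 and 4) and that
each set contains exactly one normal form: `w·(w·d) + (w·(w·w) + (w·d + w·w))` for `p` and
`w·d + (w·w + (d + w))` for `q`. Since the one-step reducts of a term form a computable finite
list, both facts are decided by saturating `[p]` and `[q]` under it.
-/

theorem Relation.ReflTransGen.mem_of_closed {α : Type*} {r : α → α → Prop} {s : Set α}
    (hs : ∀ a ∈ s, ∀ b, r a b → b ∈ s) {a b : α} (h : ReflTransGen r a b) (ha : a ∈ s) :
    b ∈ s := by
  induction h with
  | refl => exact ha
  | tail _ hbc ih => exact hs _ ih _ hbc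

namespace Tm

-- One summand per constructor of `Root`, in the same order.
def rootReducts : Tm → List Tm
  | add x y =>
      (if y = e then [x] else []) ++ (if x = e then [y] else []) ++
      (match x with | add x₁ x₂ => [add x₁ (add x₂ y)] | _ => [])
  | app x y =>
      (match x with | add x₁ x₂ => [app x₂ (app x₁ y)] | _ => []) ++
      (if x = d then [add (app w y) y] else []) ++
      (if x = e then [y] else []) ++
      (match x, y with | w, add y₁ y₂ => [add (app w y₁) (app w y₂)] | _, _ => []) ++
      (match x with | app w x₁ => [add y x₁] | _ => []) ++
      (if x = w ∧ y = e then [e] else [])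
  | _ => []

theorem mem_rootReducts_iff {t u : Tm} : u ∈ t.rootReducts ↔ Root t u := by
  constructor
  · intro h
    match t with
    | d | w | e => simp [rootReducts] at h
    | add x y | app x y =>
      rcases x with _ | _ | _ | ⟨x₁, x₂⟩ | ⟨x₁, x₂⟩ <;>
        rcases y with _ | _ | _ | ⟨y₁, y₂⟩ | ⟨y₁, y₂⟩ <;>
        (try rcases x₁ with _ | _ | _ | ⟨_, _⟩ | ⟨_, _⟩) <;>
        simp [rootReducts] at h <;> rcases h with rfl | rfl <;> constructor
  · rintro (_ | _ | _ | _ | _ | _ | _ | _ | _) <;> simp [rootReducts]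

def reducts : Tm → List Tm
  | add x y => (add x y).rootReducts ++ x.reducts.map (add · y) ++ y.reducts.map (add x ·)
  | app x y => (app x y).rootReducts ++ x.reducts.map (app · y) ++ y.reducts.map (app x ·)
  | _ => []

theorem mem_reducts_iff {t u : Tm} : u ∈ t.reducts ↔ Step t u := by
  constructor
  · induction t generalizing u with
    | d | w | e => simp [reducts]
    | add x y ihx ihy =>
      simp only [reducts, List.mem_append, List.mem_map, mem_rootReducts_iff]
      rintro ((h | ⟨v, hv, rfl⟩) | ⟨v, hv, rfl⟩)
      exacts [.root h, .addL (ihx hv), .addR (ihy hv)]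
    | app x y ihx ihy =>
      simp only [reducts, List.mem_append, List.mem_map, mem_rootReducts_iff]
      rintro ((h | ⟨v, hv, rfl⟩) | ⟨v, hv, rfl⟩)
      exacts [.root h, .appL (ihx hv), .appR (ihy hv)]
  · intro h
    induction h with
    | root h => cases h <;> simp [reducts, rootReducts]
    | addL _ ih | addR _ ih | appL _ ih | appR _ ih => simp [reducts, ih]

theorem normalForm_iff_reducts_eq_nil {t : Tm} : NormalForm t ↔ t.reducts = [] := by
  simp [NormalForm, List.eq_nil_iff_forall_not_mem, mem_reducts_iff]

theorem eq_of_steps_of_normalForm {l : List Tm} (hl : ∀ t ∈ l, ∀ u ∈ t.reducts, u ∈ l)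
    {n t u : Tm} (hn : ∀ v ∈ l, v.reducts = [] → v = n) (ht : t ∈ l) (h : Steps t u)
    (hu : NormalForm u) : u = n :=
  have hul : u ∈ l := Relation.ReflTransGen.mem_of_closed
    (fun v hv v' hvv' => hl v hv v' (mem_reducts_iff.2 hvv')) h ht
  hn u hul (normalForm_iff_reducts_eq_nil.1 hu)

-- `saturate n l` need not be closed under `reducts`; closure is checked where it is used.
def saturate : ℕ → List Tm → List Tm
  | 0, l => l
  | n + 1, l => saturate n (l ++ l.flatMap reducts).dedup

abbrev twinQ : Tm := app d (add d w)

abbrev twinP : Tm := app w twinQ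

theorem steps_twinP_app_e : Steps (app twinP e) twinQ :=
  .head (.root (.wApp _ _)) <| .single (.root (.eAdd _))

theorem steps_twinQ_app_e : Steps (app twinQ e) twinP :=
  .head (.appL (.root (.dx _))) <| .head (.root (.appAdd _ _ _)) <|
    .head (.appR (.root (.wApp _ _))) <| .head (.appR (.root (.eAdd _))) <|
    .single (.root (.appAdd _ _ _))

theorem normalForm_of_steps_twinP {u : Tm} (h : Steps twinP u) (hu : NormalForm u) :
    u = add (app w (app w d)) (add (app w (app w w)) (add (app w d) (app w w))) :=
  eq_of_steps_of_normalForm (l := saturate 6 [twinP]) (by decide) (by decide) (by decide) h hu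

theorem normalForm_of_steps_twinQ {u : Tm} (h : Steps twinQ u) (hu : NormalForm u) :
    u = add (app w d) (add (app w w) (add d w)) :=
  eq_of_steps_of_normalForm (l := saturate 3 [twinQ]) (by decide) (by decide) (by decide) h hu

end Tm

/-- Slattery's twins: p = w·(d·(d+w)) and q = d·(d+w) satisfy
p·e ≡ q and q·e ≡ p, and their normal forms are distinct. -/
theorem slattery_twins :
    TermEq (app (app w (app d (add d w))) e) (app d (add d w)) ∧
    TermEq (app (app d (add d w)) e) (app w (app d (add d w))) ∧
    (∀ np nq : Tm,
      Steps (app w (app d (add d w))) np → NormalForm np →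
      Steps (app d (add d w)) nq → NormalForm nq → np ≠ nq) := by
  refine ⟨Relation.EqvGen.reflTransGen_le_eqvGen Step _ _ Tm.steps_twinP_app_e,
    Relation.EqvGen.reflTransGen_le_eqvGen Step _ _ Tm.steps_twinQ_app_e, ?_⟩
  intro np nq hp hnp hq hnq
  rw [Tm.normalForm_of_steps_twinP hp hnp, Tm.normalForm_of_steps_twinQ hq hnq]
  decide
end

section
/- (Slattery's 3-cycle) In the equational theory E' over {d, w, e, +, ·}, letting p = (d+w+w)·(d+w+w) (sums right-associated), the three terms p, w·(d·(d+w+w)), and d·(d+w+w) form a 3-cycle under application to e: p·e ≡ w·(d·(d+w+w)), (w·(d·(d+w+w)))·e ≡ d·(d+w+w), and (d·(d+w+w))·e ≡ p. -/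
open Tm

/-! Each of the three equalities is a short rewrite sequence in the oriented rules. The key
facts are that `(w·x)·e` reduces to `x`, that `(x+(y+z))·t` reduces to `z·(y·(x·t))`, and that
`(d·x)·e` reduces to the self-application `x·x`; with `s = d+(w+w)` the cycle is then
`(s·s)·e ⟶ (w·(w·(d·s)))·e ⟶ w·(d·s)`, `(w·(d·s))·e ⟶ d·s` and `(d·s)·e ⟶ s·s`. -/

namespace Steps

variable {a b : Tm}

theorem termEq (h : Steps a b) : TermEq a b :=
  Relation.EqvGen.reflTransGen_le_eqvGen Step _ _ h

theorem single (h : Step a b) : Steps a b :=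
  Relation.ReflTransGen.single h

theorem trans {c : Tm} (hab : Steps a b) (hbc : Steps b c) : Steps a c :=
  Relation.ReflTransGen.trans hab hbc

theorem appL (h : Steps a b) (t : Tm) : Steps (app a t) (app b t) :=
  Relation.ReflTransGen.lift (app · t) (fun _ _ => Step.appL) _ _ h

theorem appR (t : Tm) (h : Steps a b) : Steps (app t a) (app t b) :=
  Relation.ReflTransGen.lift (app t ·) (fun _ _ => Step.appR) _ _ h

end Steps

theorem steps_app_add_add (x y z t : Tm) :
    Steps (app (add x (add y z)) t) (app z (app y (app x t))) :=
  (Steps.single (.root (.appAdd x (add y z) t))).trans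
    (Steps.single (.root (.appAdd y z (app x t))))

theorem steps_app_app_w_e (x : Tm) : Steps (app (app w x) e) x :=
  (Steps.single (.root (.wApp x e))).trans (Steps.single (.root (.eAdd x)))

theorem steps_app_app_d_e (x : Tm) : Steps (app (app d x) e) (app x x) := by
  have unfold_d : Steps (app (app d x) e) (app (add (app w x) x) e) :=
    Steps.single (.appL (.root (.dx x)))
  have distribute : Steps (app (add (app w x) x) e) (app x (app (app w x) e)) :=
    Steps.single (.root (.appAdd (app w x) x e))
  exact unfold_d.trans (distribute.trans (Steps.appR x (steps_app_app_w_e x)))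

/-- Slattery's 3-cycle: with p = (d+(w+w))·(d+(w+w)),
the terms p, w·(d·(d+(w+w))), d·(d+(w+w)) form a 3-cycle under
application to e. -/
theorem slattery_three_cycle :
    TermEq (app (app (add d (add w w)) (add d (add w w))) e)
      (app w (app d (add d (add w w)))) ∧
    TermEq (app (app w (app d (add d (add w w)))) e)
      (app d (add d (add w w))) ∧
    TermEq (app (app d (add d (add w w))) e)
      (app (add d (add w w)) (add d (add w w))) := by
  set s := add d (add w w)
  refine ⟨?_, (steps_app_app_w_e (app d s)).termEq, (steps_app_app_d_e s).termEq⟩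
  have expand_s : Steps (app (app s s) e) (app (app w (app w (app d s))) e) :=
    (steps_app_add_add d w w s).appL e
  exact (expand_s.trans (steps_app_app_w_e _)).termEq
end
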